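/- arXiv:2005.10242 — 3 statements merged into one kernel-verified Lean document; each statement's English description precedes it below -/
import Mathlib

section
/- Let d ≥ 1 and t > 0. The uniform probability measure σ_d is the unique Borel probability measure on S^d minimizing the Gaussian energy: for every Borel probability measure μ on S^d, I_{G_t}[μ] ≥ I_{G_t}[σ_d], with equality if and only if μ = σ_d (as measures on the Borel subsets of S^d). -/
open MeasureTheory Real Filter Metric
open scoped RealInnerProductSpace ENNReal Topology BigOperators

noncomputable section

/-- `ℝ^n` as a Euclidean space. -/
abbrev Euc (n : ℕ) : Type := EuclideanSpace ℝ (Fin n)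

/-- The unit sphere in `ℝ^m`; the sphere `S^d` of the informal statement is `Sph (d+1)`. -/
abbrev Sph (m : ℕ) := Metric.sphere (0 : Euc m) 1

/-- The uniform (normalized surface-area) probability measure on the unit sphere of `ℝ^m`. -/
noncomputable def unifSphere (m : ℕ) : Measure (Sph m) :=
  ((volume : Measure (Euc m)).toSphere Set.univ)⁻¹ • (volume : Measure (Euc m)).toSphere

/-- Gaussian energy `I_{G_t}[μ] = ∫∫ exp(−t‖u−v‖²) dμ dμ` of a measure on the sphere. -/
noncomputable def gaussEnergy (t : ℝ) {m : ℕ} (μ : Measure (Sph m)) : ℝ :=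
  ∫ u, ∫ v, Real.exp (-t * ‖(u : Euc m) - (v : Euc m)‖ ^ 2) ∂μ ∂μ

/-!
On the sphere `‖u - v‖² = 2 - 2⟪u, v⟫`, so `G_t(u, v) = e^{-2t} ∑ₙ (2t)ⁿ/n! ⟪u, v⟫ⁿ`, and
`⟪u, v⟫ⁿ = ∑_g x_g(u) x_g(v)` over the coordinate monomials `x_g` of degree `n`. Hence the mutual
energy of `μ` and `ν` is `∑ₙ cₙ ∑_g m_g(μ) m_g(ν)` in the moments `m_g`, and
`I[μ] - 2 I[μ, σ] + I[σ] = ∑ₙ cₙ ∑_g (m_g(μ) - m_g(σ))² ≥ 0` with `cₙ > 0`.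
Rotation invariance of `σ` makes its potential constant, so `I[μ, σ] = I[σ]` and the left side is
`I[μ] - I[σ]`. Equality forces all moments of `μ` and `σ` to agree, and a finite measure on the
sphere is determined by its moments (Stone–Weierstrass), so `μ = σ`.
-/

def gaussCoeff (t : ℝ) (n : ℕ) : ℝ := rexp (-(2 * t)) * ((2 * t) ^ n / n.factorial)

lemma gaussCoeff_pos {t : ℝ} (ht : 0 < t) (n : ℕ) : 0 < gaussCoeff t n := by
  unfold gaussCoeff; positivity

lemma summable_norm_gaussCoeff (t : ℝ) : Summable fun n => ‖gaussCoeff t n‖ := by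
  simpa [gaussCoeff, abs_mul, abs_div, abs_pow] using
    (Real.summable_pow_div_factorial |2 * t|).mul_left (rexp (-(2 * t)))

lemma hasSum_gaussCoeff_mul_inner_pow {E : Type*} [NormedAddCommGroup E] [InnerProductSpace ℝ E]
    (t : ℝ) {u v : E} (hu : ‖u‖ = 1) (hv : ‖v‖ = 1) :
    HasSum (fun n => gaussCoeff t n * ⟪u, v⟫ ^ n) (rexp (-t * ‖u - v‖ ^ 2)) := by
  have hexp : HasSum (fun n : ℕ => (2 * t * ⟪u, v⟫) ^ n / n.factorial) (rexp (2 * t * ⟪u, v⟫)) := by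
    rw [Real.exp_eq_exp_ℝ]; exact NormedSpace.expSeries_div_hasSum_exp _
  have hnorm : -t * ‖u - v‖ ^ 2 = -(2 * t) + 2 * t * ⟪u, v⟫ := by
    rw [norm_sub_sq_real, hu, hv]; ring
  rw [hnorm, Real.exp_add]
  have hterm (n : ℕ) :
      gaussCoeff t n * ⟪u, v⟫ ^ n = rexp (-(2 * t)) * ((2 * t * ⟪u, v⟫) ^ n / n.factorial) := by
    rw [gaussCoeff, mul_pow]; ring
  simpa only [hterm] using hexp.mul_left (rexp (-(2 * t)))

section Moments

variable {m : ℕ}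

def coordProd {n : ℕ} (g : Fin n → Fin m) (x : Euc m) : ℝ := ∏ j, x (g j)

lemma inner_pow_eq_sum_coordProd (x y : Euc m) (n : ℕ) :
    ⟪x, y⟫ ^ n = ∑ g : Fin n → Fin m, coordProd g x * coordProd g y := by
  simp only [PiLp.inner_apply, RCLike.inner_apply, conj_trivial, Fintype.sum_pow, coordProd,
    ← Finset.prod_mul_distrib, mul_comm]

@[fun_prop]
lemma continuous_coordProd {n : ℕ} (g : Fin n → Fin m) : Continuous (coordProd g) := by
  unfold coordProd; fun_prop

def sphereMoment (μ : Measure (Sph m)) {n : ℕ} (g : Fin n → Fin m) : ℝ :=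
  ∫ u, coordProd g u ∂μ

lemma integral_inner_pow_eq_sum_sphereMoment (μ ν : Measure (Sph m)) [IsFiniteMeasure μ]
    [IsFiniteMeasure ν] (n : ℕ) :
    ∫ z : Sph m × Sph m, ⟪(z.1 : Euc m), z.2⟫ ^ n ∂μ.prod ν
      = ∑ g : Fin n → Fin m, sphereMoment μ g * sphereMoment ν g := by
  simp_rw [inner_pow_eq_sum_coordProd]
  rw [integral_finsetSum _ fun g _ =>
    Continuous.integrable_of_hasCompactSupport (by fun_prop) (.of_compactSpace _)]
  simp_rw [sphereMoment, ← integral_prod_mul]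

end Moments

section Energy

variable {m : ℕ}

def mutualGaussEnergy (t : ℝ) (μ ν : Measure (Sph m)) : ℝ :=
  ∫ u, ∫ v, rexp (-t * ‖(u : Euc m) - (v : Euc m)‖ ^ 2) ∂ν ∂μ

lemma hasSum_mutualGaussEnergy (t : ℝ) (μ ν : Measure (Sph m)) [IsFiniteMeasure μ]
    [IsFiniteMeasure ν] :
    HasSum (fun n => gaussCoeff t n * ∑ g : Fin n → Fin m, sphereMoment μ g * sphereMoment ν g)
      (mutualGaussEnergy t μ ν) := by
  set F : ℕ → Sph m × Sph m → ℝ := fun n z => gaussCoeff t n * ⟪(z.1 : Euc m), z.2⟫ ^ n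
  have hF_int (n : ℕ) : Integrable (F n) (μ.prod ν) :=
    Continuous.integrable_of_hasCompactSupport (by fun_prop) (.of_compactSpace _)
  have hF_le (n : ℕ) : ∫ z, ‖F n z‖ ∂μ.prod ν ≤ ‖gaussCoeff t n‖ * (μ.prod ν).real Set.univ := by
    refine (integral_mono (hF_int n).norm (integrable_const _) fun z => ?_).trans_eq
      (by rw [integral_const, smul_eq_mul, mul_comm])
    rw [norm_mul, norm_pow, Real.norm_eq_abs (⟪_, _⟫)]
    refine mul_le_of_le_one_right (norm_nonneg _) (pow_le_one₀ (abs_nonneg _) ?_)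
    simpa [norm_eq_of_mem_sphere] using abs_real_inner_le_norm (z.1 : Euc m) z.2
  have hF_sum : Summable fun n => ∫ z, ‖F n z‖ ∂μ.prod ν :=
    .of_nonneg_of_le (fun n => integral_nonneg fun z => norm_nonneg _) hF_le
      ((summable_norm_gaussCoeff t).mul_right _)
  have hK (z : Sph m × Sph m) :
      rexp (-t * ‖(z.1 : Euc m) - z.2‖ ^ 2) = ∑' n, F n z :=
    (hasSum_gaussCoeff_mul_inner_pow t (norm_eq_of_mem_sphere z.1)
      (norm_eq_of_mem_sphere z.2)).tsum_eq.symm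
  have hK_int : Integrable (fun z : Sph m × Sph m => rexp (-t * ‖(z.1 : Euc m) - z.2‖ ^ 2))
      (μ.prod ν) :=
    Continuous.integrable_of_hasCompactSupport (by fun_prop) (.of_compactSpace _)
  rw [mutualGaussEnergy, integral_integral hK_int]
  simp_rw [hK]
  refine (hasSum_integral_of_summable_integral_norm hF_int hF_sum).congr_fun fun n => ?_
  rw [integral_const_mul, integral_inner_pow_eq_sum_sphereMoment]

lemma hasSum_gaussEnergy_sub_two_mul_mutualGaussEnergy_add (t : ℝ) (μ ν : Measure (Sph m))
    [IsFiniteMeasure μ] [IsFiniteMeasure ν] :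
    HasSum (fun n => gaussCoeff t n *
        ∑ g : Fin n → Fin m, (sphereMoment μ g - sphereMoment ν g) ^ 2)
      (gaussEnergy t μ - 2 * mutualGaussEnergy t μ ν + gaussEnergy t ν) := by
  refine (((hasSum_mutualGaussEnergy t μ μ).sub ((hasSum_mutualGaussEnergy t μ ν).mul_left 2)).add
    (hasSum_mutualGaussEnergy t ν ν)).congr_fun fun n => ?_
  simp only [sub_sq, ← sq, mul_assoc, Finset.sum_add_distrib, Finset.sum_sub_distrib,
    ← Finset.mul_sum]
  ring

end Energy

section Invariance

variable {E : Type*} [NormedAddCommGroup E] [NormedSpace ℝ E]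

def sphereMap (T : E ≃ₗᵢ[ℝ] E) (u : sphere (0 : E) 1) : sphere (0 : E) 1 :=
  ⟨T u, by simp⟩

@[fun_prop]
lemma continuous_sphereMap (T : E ≃ₗᵢ[ℝ] E) : Continuous (sphereMap T) := by
  unfold sphereMap; fun_prop

open scoped Pointwise in
lemma measurePreserving_sphereMap_toSphere [MeasurableSpace E] [BorelSpace E] {μ : Measure E}
    (T : E ≃ₗᵢ[ℝ] E) (hT : MeasurePreserving T μ μ) :
    MeasurePreserving (sphereMap T) μ.toSphere μ.toSphere := by
  refine ⟨(continuous_sphereMap T).measurable, Measure.ext fun s hs => ?_⟩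
  -- `μ.toSphere s` is a multiple of the `μ`-measure of the cone `(0, 1) • s`.
  have hcone : Set.Ioo (0 : ℝ) 1 • ((↑) '' (sphereMap T ⁻¹' s) : Set E)
      = T ⁻¹' (Set.Ioo (0 : ℝ) 1 • ((↑) '' s)) := by
    ext x
    simp only [Set.mem_smul, Set.mem_image, Set.mem_preimage, sphereMap]
    constructor
    · rintro ⟨r, hr, _, ⟨u, hu, rfl⟩, rfl⟩
      exact ⟨r, hr, T u, ⟨_, hu, rfl⟩, by simp⟩
    · rintro ⟨r, hr, _, ⟨w, hw, rfl⟩, hx⟩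
      refine ⟨r, hr, T.symm w, ⟨⟨T.symm w, by simp⟩, by simpa using hw, rfl⟩, ?_⟩
      rw [← T.symm.map_smul, hx, T.symm_apply_apply]
  rw [Measure.map_apply (continuous_sphereMap T).measurable hs, Measure.toSphere_apply' _ hs,
    Measure.toSphere_apply' _ ((continuous_sphereMap T).measurable hs), hcone,
    hT.measure_preimage_emb T.toHomeomorph.measurableEmbedding]

end Invariance

section Uniform

variable {m : ℕ}

instance (m : ℕ) : IsProbabilityMeasure (unifSphere (m + 1)) := by
  constructor
  rw [unifSphere, Measure.smul_apply, smul_eq_mul]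
  exact ENNReal.inv_mul_cancel (Measure.measure_univ_ne_zero.2 (Measure.toSphere_ne_zero _))
    (measure_ne_top _ _)

lemma measurePreserving_sphereMap_unifSphere (T : Euc m ≃ₗᵢ[ℝ] Euc m) :
    MeasurePreserving (sphereMap T) (unifSphere m) (unifSphere m) := by
  refine ⟨(continuous_sphereMap T).measurable, ?_⟩
  rw [unifSphere, Measure.map_smul,
    (measurePreserving_sphereMap_toSphere T T.measurePreserving).map_eq]

lemma integral_gaussKernel_unifSphere_eq (t : ℝ) (u u' : Sph m) :
    ∫ v, rexp (-t * ‖(u : Euc m) - v‖ ^ 2) ∂unifSphere m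
      = ∫ v, rexp (-t * ‖(u' : Euc m) - v‖ ^ 2) ∂unifSphere m := by
  set T := (ℝ ∙ ((u : Euc m) - u'))ᗮ.reflection
  have hTu : T u = u' :=
    Submodule.reflection_sub (by rw [norm_eq_of_mem_sphere, norm_eq_of_mem_sphere])
  conv_rhs => rw [← (measurePreserving_sphereMap_unifSphere T).map_eq]
  rw [integral_map (continuous_sphereMap T).aemeasurable
    (Continuous.aestronglyMeasurable (by fun_prop))]
  simp [sphereMap, ← hTu, ← map_sub]

lemma mutualGaussEnergy_unifSphere_right (t : ℝ) (μ : Measure (Sph m)) [IsProbabilityMeasure μ]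
    (u₀ : Sph m) :
    mutualGaussEnergy t μ (unifSphere m)
      = ∫ v, rexp (-t * ‖(u₀ : Euc m) - v‖ ^ 2) ∂unifSphere m := by
  simp_rw [mutualGaussEnergy, integral_gaussKernel_unifSphere_eq t _ u₀, integral_const,
    probReal_univ, one_smul]

lemma hasSum_gaussEnergy_sub_unifSphere (t : ℝ) (μ : Measure (Sph m)) [IsProbabilityMeasure μ]
    [IsProbabilityMeasure (unifSphere m)] :
    HasSum (fun n => gaussCoeff t n *
        ∑ g : Fin n → Fin m, (sphereMoment μ g - sphereMoment (unifSphere m) g) ^ 2)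
      (gaussEnergy t μ - gaussEnergy t (unifSphere m)) := by
  obtain ⟨u₀⟩ := nonempty_of_isProbabilityMeasure μ
  have hM : mutualGaussEnergy t μ (unifSphere m) = gaussEnergy t (unifSphere m) :=
    (mutualGaussEnergy_unifSphere_right t μ u₀).trans
      (mutualGaussEnergy_unifSphere_right t (unifSphere m) u₀).symm
  have key := hasSum_gaussEnergy_sub_two_mul_mutualGaussEnergy_add t μ (unifSphere m)
  rwa [hM, show ∀ a b : ℝ, a - 2 * b + b = a - b by intros; ring] at key

end Uniform

section MomentDeterminacy

open scoped BoundedContinuousFunction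

variable {m : ℕ}

def coordBCF (i : Fin m) : Sph m →ᵇ ℝ :=
  .mkOfCompact ⟨fun u => (u : Euc m) i, by fun_prop⟩

lemma prod_coordBCF_apply {n : ℕ} (g : Fin n → Fin m) (u : Sph m) :
    (∏ j, coordBCF (g j)) u = coordProd g u := by
  simp [coordProd, coordBCF]

lemma star_range_coordBCF : star (Set.range (coordBCF (m := m))) = Set.range coordBCF := by
  ext f
  simp [show star f = f from BoundedContinuousFunction.ext fun _ => star_trivial _]

lemma exists_eq_prod_coordBCF_of_mem_closure {f : Sph m →ᵇ ℝ}
    (hf : f ∈ Submonoid.closure (Set.range (coordBCF (m := m)))) :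
    ∃ n, ∃ g : Fin n → Fin m, f = ∏ j, coordBCF (g j) := by
  induction hf using Submonoid.closure_induction with
  | mem f hf =>
    obtain ⟨i, rfl⟩ := hf
    exact ⟨1, fun _ => i, by simp⟩
  | one => exact ⟨0, Fin.elim0, by simp⟩
  | mul f f' _ _ hf hf' =>
    obtain ⟨n, g, rfl⟩ := hf
    obtain ⟨n', g', rfl⟩ := hf'
    exact ⟨n + n', Fin.append g g', by simp [Fin.prod_univ_add]⟩

theorem ext_of_sphereMoment_eq {μ ν : Measure (Sph m)} [IsFiniteMeasure μ] [IsFiniteMeasure ν]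
    (h : ∀ n (g : Fin n → Fin m), sphereMoment μ g = sphereMoment ν g) : μ = ν := by
  refine ext_of_forall_mem_subalgebra_integral_eq_of_pseudoEMetric_complete_countable
    (A := StarAlgebra.adjoin ℝ (Set.range coordBCF)) ?_ fun p hp => ?_
  · intro x y hxy
    obtain ⟨i, hi⟩ : ∃ i, (x : Euc m) i ≠ (y : Euc m) i := by
      by_contra! hc
      exact hxy (Subtype.ext (PiLp.ext hc))
    exact ⟨_, ⟨_, ⟨coordBCF i, StarAlgebra.subset_adjoin ℝ _ (Set.mem_range_self i), rfl⟩, rfl⟩,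
      hi⟩
  rw [← StarSubalgebra.mem_toSubalgebra, StarAlgebra.adjoin_toSubalgebra, star_range_coordBCF,
    Set.union_self, ← Subalgebra.mem_toSubmodule, Algebra.adjoin_eq_span] at hp
  induction hp using Submodule.span_induction with
  | mem f hf =>
    obtain ⟨n, g, rfl⟩ := exists_eq_prod_coordBCF_of_mem_closure hf
    simpa only [sphereMoment, prod_coordBCF_apply] using h n g
  | zero => simp
  | add f f' _ _ hf hf' =>
    simp only [BoundedContinuousFunction.coe_add, Pi.add_apply]
    rw [integral_add (f.integrable _) (f'.integrable _),
      integral_add (f.integrable _) (f'.integrable _), hf, hf']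
  | smul a f _ hf =>
    simp only [BoundedContinuousFunction.coe_smul, smul_eq_mul]
    rw [integral_const_mul, integral_const_mul, hf]

end MomentDeterminacy

theorem uniform_unique_gaussEnergy_minimizer_general (d : ℕ) (t : ℝ) (ht : 0 < t)
    (μ : Measure (Sph (d + 1))) [IsProbabilityMeasure μ] :
    gaussEnergy t (unifSphere (d + 1)) ≤ gaussEnergy t μ ∧
      (gaussEnergy t μ = gaussEnergy t (unifSphere (d + 1)) ↔ μ = unifSphere (d + 1)) := by
  have hsum := hasSum_gaussEnergy_sub_unifSphere t μ
  have hterm_nonneg (n : ℕ) : 0 ≤ gaussCoeff t n *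
      ∑ g : Fin n → Fin (d + 1), (sphereMoment μ g - sphereMoment (unifSphere (d + 1)) g) ^ 2 :=
    mul_nonneg (gaussCoeff_pos ht n).le (Finset.sum_nonneg fun g _ => sq_nonneg _)
  refine ⟨sub_nonneg.1 (hsum.nonneg hterm_nonneg), fun heq => ?_, fun h => h ▸ rfl⟩
  rw [heq, sub_self, hasSum_zero_iff_of_nonneg hterm_nonneg] at hsum
  refine ext_of_sphereMoment_eq fun n g => ?_
  have hsq_sum := (mul_eq_zero.1 (congrFun hsum n)).resolve_left (gaussCoeff_pos ht n).ne'
  have hsq := (Fintype.sum_eq_zero_iff_of_nonneg fun g => sq_nonneg _).1 hsq_sum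
  exact sub_eq_zero.1 (pow_eq_zero_iff two_ne_zero |>.1 (congrFun hsq g))

/-- For `d ≥ 1` and `t > 0`, the uniform probability measure `σ_d` on `S^d`
is the unique Borel probability measure minimizing the Gaussian energy `I_{G_t}`. -/
theorem uniform_unique_gaussEnergy_minimizer (d : ℕ) (hd : 1 ≤ d) (t : ℝ) (ht : 0 < t)
    (μ : Measure (Sph (d + 1))) [IsProbabilityMeasure μ] :
    gaussEnergy t (unifSphere (d + 1)) ≤ gaussEnergy t μ ∧
      (gaussEnergy t μ = gaussEnergy t (unifSphere (d + 1)) ↔ μ = unifSphere (d + 1)) :=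
  uniform_unique_gaussEnergy_minimizer_general d t ht μ
end
end

section
/- Let τ > 0, f : ℝⁿ → S^{m−1} be Borel measurable, p_data a Borel probability measure on ℝⁿ, and x, y ∈ ℝⁿ fixed. If x⁻₁, x⁻₂, … are i.i.d. samples from p_data, then almost surely lim_{M→∞} log( (1/M) e^{f(x)·f(y)/τ} + (1/M) Σ_{i=1}^M e^{f(x⁻_i)·f(x)/τ} ) = log E_{x⁻∼p_data}[e^{f(x⁻)·f(x)/τ}]. -/
open MeasureTheory Real Filter Metric
open scoped RealInnerProductSpace ENNReal Topology BigOperators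

noncomputable section

/-!
Exponentials of inner products of unit vectors are bounded, hence the summands
`exp (⟪f (X i), f x⟫ / τ)` are i.i.d. integrable random variables and their averages converge
almost surely to `∫ exp (⟪f x', f x⟫ / τ) ∂p_data` by the strong law of large numbers. The
extra term `exp (⟪f x, f y⟫ / τ) / M` tends to `0`, and the limit is positive, so `log` is
continuous there.
-/

open ProbabilityTheory Finset

section

variable {α : Type*} [MeasurableSpace α]

lemma integrable_exp_of_abs_le {μ : Measure α} [IsFiniteMeasure μ] {h : α → ℝ}
    (hh : AEStronglyMeasurable h μ) {C : ℝ} (hC : ∀ a, |h a| ≤ C) :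
    Integrable (fun a => Real.exp (h a)) μ :=
  .of_bound (Real.continuous_exp.comp_aestronglyMeasurable hh) (Real.exp C) <|
    ae_of_all _ fun a => by
      rw [Real.norm_of_nonneg (Real.exp_pos _).le]
      exact Real.exp_le_exp.2 ((le_abs_self _).trans (hC a))

theorem strong_law_ae_comp {Ω : Type*} [MeasurableSpace Ω] {P : Measure Ω}
    {μ : Measure α} {X : ℕ → Ω → α} (hX : ∀ i, Measurable (X i))
    (hindep : Pairwise fun i j => IndepFun (X i) (X j) P) (hdist : ∀ i, P.map (X i) = μ)
    {g : α → ℝ} (hg : Measurable g) (hgi : Integrable g μ) :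
    ∀ᵐ ω ∂P, Tendsto (fun M : ℕ => (M : ℝ)⁻¹ * ∑ i ∈ range M, g (X i ω))
      atTop (𝓝 (∫ a, g a ∂μ)) := by
  have hint : Integrable (g ∘ X 0) P :=
    (integrable_map_measure hg.aestronglyMeasurable (hX 0).aemeasurable).1 (hdist 0 ▸ hgi)
  have hident : ∀ i, IdentDistrib (g ∘ X i) (g ∘ X 0) P P := fun i =>
    (IdentDistrib.mk (hX i).aemeasurable (hX 0).aemeasurable (by rw [hdist, hdist])).comp hg
  have hmean : ∫ ω, g (X 0 ω) ∂P = ∫ a, g a ∂μ := by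
    rw [← hdist 0, integral_map (hX 0).aemeasurable hg.aestronglyMeasurable]
  filter_upwards [strong_law_ae_real (fun i => g ∘ X i) hint
    (fun i j hij => (hindep hij).comp hg hg) hident] with ω hω
  simpa only [hmean, div_eq_inv_mul, Function.comp_apply] using hω

end

lemma abs_real_inner_div_le {F : Type*} [NormedAddCommGroup F] [InnerProductSpace ℝ F]
    {u v : F} (hu : ‖u‖ = 1) (hv : ‖v‖ = 1) (τ : ℝ) : |⟪u, v⟫ / τ| ≤ |τ|⁻¹ := by
  calc |⟪u, v⟫ / τ| = |⟪u, v⟫| * |τ|⁻¹ := by rw [abs_div, div_eq_mul_inv]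
    _ ≤ 1 * |τ|⁻¹ := by
      gcongr
      simpa [hu, hv] using abs_real_inner_le_norm u v
    _ = |τ|⁻¹ := one_mul _

theorem log_avg_exp_tendsto_ae_general {n m : ℕ} (τ : ℝ)
    (pdata : Measure (Euc n)) [IsProbabilityMeasure pdata]
    (f : Euc n → Sph m) (hf : Measurable f) (x y : Euc n)
    {Ω : Type*} [MeasurableSpace Ω] (P : Measure Ω)
    (X : ℕ → Ω → Euc n) (hXmeas : ∀ i, Measurable (X i))
    (hindep : ProbabilityTheory.iIndepFun (m := fun _ : ℕ => (inferInstance : MeasurableSpace (Euc n))) X P)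
    (hdist : ∀ i, P.map (X i) = pdata) :
    ∀ᵐ ω ∂P, Tendsto (fun M : ℕ =>
        Real.log ((1 / (M : ℝ)) * Real.exp (⟪(f x : Euc m), (f y : Euc m)⟫ / τ) +
          (1 / (M : ℝ)) * ∑ i ∈ Finset.range M, Real.exp (⟪(f (X i ω) : Euc m), (f x : Euc m)⟫ / τ)))
      atTop (𝓝 (Real.log (∫ x', Real.exp (⟪(f x' : Euc m), (f x : Euc m)⟫ / τ) ∂pdata))) := by
  have hsph : ∀ z, ‖(f z : Euc m)‖ = 1 := fun z => mem_sphere_zero_iff_norm.1 (f z).2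
  have hinner : Measurable fun z => ⟪(f z : Euc m), (f x : Euc m)⟫ / τ :=
    ((measurable_subtype_coe.comp hf).inner measurable_const).div_const τ
  have hint : Integrable (fun z => Real.exp (⟪(f z : Euc m), (f x : Euc m)⟫ / τ)) pdata :=
    integrable_exp_of_abs_le hinner.aestronglyMeasurable
      fun z => abs_real_inner_div_le (hsph z) (hsph x) τ
  have hpos := integral_exp_pos hint
  filter_upwards [strong_law_ae_comp hXmeas (fun i j hij => hindep.indepFun hij) hdist
    hinner.exp hint] with ω hω
  have hvanish : Tendsto (fun M : ℕ => 1 / (M : ℝ) * Real.exp (⟪(f x : Euc m), (f y : Euc m)⟫ / τ))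
      atTop (𝓝 0) := by
    simpa using tendsto_one_div_atTop_nhds_zero_nat.mul_const
      (Real.exp (⟪(f x : Euc m), (f y : Euc m)⟫ / τ))
  refine (Real.continuousAt_log hpos.ne').tendsto.comp ?_
  simpa only [one_div, zero_add] using hvanish.add hω

/-- Strong-law convergence of the log-sum term: if `X 0, X 1, …` are i.i.d.
samples from `p_data`, then almost surely
`log((1/M) e^{f(x)·f(y)/τ} + (1/M) Σ_{i<M} e^{f(X i)·f(x)/τ}) →
 log E_{x⁻∼p_data}[e^{f(x⁻)·f(x)/τ}]` as `M → ∞`. -/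
theorem log_avg_exp_tendsto_ae {n m : ℕ} (τ : ℝ) (hτ : 0 < τ)
    (pdata : Measure (Euc n)) [IsProbabilityMeasure pdata]
    (f : Euc n → Sph m) (hf : Measurable f) (x y : Euc n)
    {Ω : Type*} [MeasurableSpace Ω] (P : Measure Ω) [IsProbabilityMeasure P]
    (X : ℕ → Ω → Euc n) (hXmeas : ∀ i, Measurable (X i))
    (hindep : ProbabilityTheory.iIndepFun (m := fun _ : ℕ => (inferInstance : MeasurableSpace (Euc n))) X P)
    (hdist : ∀ i, P.map (X i) = pdata) :
    ∀ᵐ ω ∂P, Tendsto (fun M : ℕ =>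
        Real.log ((1 / (M : ℝ)) * Real.exp (⟪(f x : Euc m), (f y : Euc m)⟫ / τ) +
          (1 / (M : ℝ)) * ∑ i ∈ Finset.range M, Real.exp (⟪(f (X i ω) : Euc m), (f x : Euc m)⟫ / τ)))
      atTop (𝓝 (Real.log (∫ x', Real.exp (⟪(f x' : Euc m), (f x : Euc m)⟫ / τ) ∂pdata))) :=
  log_avg_exp_tendsto_ae_general τ pdata f hf x y P X hXmeas hindep hdist
end
end

section
/- Let t > 0, m ≥ 2, and B > 1 an integer. For any points u₁, …, u_B ∈ S^{m−1}, the empirical uniformity quantity satisfies the strict lower bound log( (1/B²) Σ_{i=1}^B Σ_{j=1}^B e^{−t‖u_i − u_j‖₂²} ) > −2t + log ₀F₁(;m/2; t²). -/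
open MeasureTheory Real Filter Metric
open scoped RealInnerProductSpace ENNReal Topology BigOperators

noncomputable section

/-- Confluent hypergeometric limit function `₀F₁(; α; z) = Σ_n zⁿ/((α)_n n!)`. -/
noncomputable def hyp0F1 (α z : ℝ) : ℝ :=
  ∑' k : ℕ, z ^ k / ((ascPochhammer ℝ k).eval α * (Nat.factorial k : ℝ))

/-!
On the unit sphere `‖u - v‖² = 2 - 2⟪u, v⟫`, so the claim is
`B² ₀F₁(m/2; t²) < ∑ᵢⱼ exp (2t⟪uᵢ, uⱼ⟫)`. Expanding the exponential, the right side is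
`∑ₖ (2t)ᵏ/k! · Qₖ` with `Qₖ = ∑ᵢⱼ ⟪uᵢ, uⱼ⟫ᵏ = ‖∑ᵢ uᵢ^⊗k‖² ≥ 0`, and `(2n)! = 4ⁿ n! (1/2)ₙ` turns the
left side into `∑ₙ (2t)²ⁿ/(2n)! · B² (1/2)ₙ/(m/2)ₙ`. Termwise, Cauchy–Schwarz against the
symmetric tensor representing `x ↦ ‖x‖²ⁿ`, whose squared norm is `(m/2)ₙ/(1/2)ₙ` by the
Vandermonde identity for `multichoose`, gives `Q₂ₙ ≥ B² (1/2)ₙ/(m/2)ₙ`. The inequality is strict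
at `n = B²`: there the diagonal alone gives `Q₂ₙ ≥ B`, while
`(1/2)ₙ/(m/2)ₙ ≤ binom(2n, n)/4ⁿ < 1/√(2n+1) < 1/B`.
-/

open Finset Nat

namespace Ring

variable {R : Type*} [CommRing R] [BinomialRing R]

theorem multichoose_add (r s : R) (n : ℕ) :
    multichoose (r + s) n = ∑ ij ∈ antidiagonal n, multichoose r ij.1 * multichoose s ij.2 := by
  have h := add_choose_eq (r := -r) (s := -s) n (Commute.all _ _)
  simp only [← neg_add, choose_neg', smul_mul_smul_comm, ← Int.negOnePow_add, ← Nat.cast_add] at h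
  rw [sum_congr rfl fun ij hij => by rw [mem_antidiagonal.mp hij], ← smul_sum] at h
  exact (smul_left_cancel_iff _).mp h

theorem multichoose_sum {ι : Type*} [DecidableEq ι] (s : Finset ι) (x : ι → R) (n : ℕ) :
    multichoose (∑ i ∈ s, x i) n = ∑ γ ∈ piAntidiag s n, ∏ i ∈ s, multichoose (x i) (γ i) := by
  let P : R → PowerSeries R := fun r => PowerSeries.mk (multichoose r)
  have hP : ∏ i ∈ s, P (x i) = P (∑ i ∈ s, x i) := by
    induction s using Finset.cons_induction with
    | empty => ext (_ | k) <;> simp [P, multichoose_zero_succ]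
    | cons i s hi ih =>
      rw [prod_cons, ih, sum_cons]
      ext k
      simp [P, PowerSeries.coeff_mul, multichoose_add]
  have := congrArg (PowerSeries.coeff n) hP
  rw [PowerSeries.coeff_prod, finsuppAntidiag, sum_map] at this
  simpa [P, sum_attach (piAntidiag s n) (fun γ => ∏ i ∈ s, multichoose (x i) (γ i))] using this.symm

theorem multichoose_eq_ascPochhammer_div {K : Type*} [Field K] [CharZero K] (x : K) (n : ℕ) :
    multichoose x n = (ascPochhammer K n).eval x / n ! := by
  rw [eq_div_iff (Nat.cast_ne_zero.mpr (factorial_ne_zero n)), mul_comm, ← nsmul_eq_mul,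
    factorial_nsmul_multichoose_eq_ascPochhammer, Polynomial.ascPochhammer_smeval_eq_eval]

end Ring

theorem factorial_two_mul_eq_ascPochhammer {K : Type*} [Field K] [CharZero K] (n : ℕ) :
    ((2 * n)! : K) = 4 ^ n * n ! * (ascPochhammer K n).eval (1 / 2) := by
  induction n with
  | zero => simp
  | succ n ih =>
    rw [show 2 * (n + 1) = 2 * n + 1 + 1 by ring, factorial_succ, factorial_succ,
      factorial_succ, ascPochhammer_succ_eval]
    push_cast
    rw [ih]
    field_simp
    ring

theorem factorial_le_ascPochhammer_eval {x : ℝ} (hx : 1 ≤ x) (n : ℕ) :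
    (n ! : ℝ) ≤ (ascPochhammer ℝ n).eval x := by
  induction n with
  | zero => simp
  | succ n ih =>
    rw [ascPochhammer_succ_eval, factorial_succ, Nat.cast_mul, mul_comm]
    push_cast
    exact mul_le_mul ih (by linarith) (by positivity) (ih.trans' (by positivity))

namespace Nat

theorem cast_centralBinom {K : Type*} [Field K] [CharZero K] (n : ℕ) :
    (centralBinom n : K) = (2 * n)! / n ! ^ 2 := by
  rw [centralBinom_eq_two_mul_choose, Nat.cast_choose K (by omega), show 2 * n - n = n by omega,
    sq]

theorem cast_centralBinom_eq_multichoose {K : Type*} [Field K] [CharZero K] (n : ℕ) :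
    (centralBinom n : K) = 4 ^ n * Ring.multichoose (1 / 2 : K) n := by
  have hn : (n ! : K) ≠ 0 := Nat.cast_ne_zero.mpr (factorial_ne_zero n)
  rw [cast_centralBinom, factorial_two_mul_eq_ascPochhammer, Ring.multichoose_eq_ascPochhammer_div]
  field_simp

theorem centralBinom_sq_mul_le (n : ℕ) : centralBinom n ^ 2 * (2 * n + 1) ≤ 16 ^ n := by
  induction n with
  | zero => simp
  | succ n ih =>
    have hpoly : 4 * (2 * n + 1) * (2 * n + 3) ≤ 16 * (n + 1) ^ 2 := by nlinarith
    have key : (n + 1) ^ 2 * (centralBinom (n + 1) ^ 2 * (2 * (n + 1) + 1))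
        ≤ (n + 1) ^ 2 * 16 ^ (n + 1) :=
      calc (n + 1) ^ 2 * (centralBinom (n + 1) ^ 2 * (2 * (n + 1) + 1))
          = 4 * (2 * n + 1) * (2 * n + 3) * (centralBinom n ^ 2 * (2 * n + 1)) := by
            rw [← mul_assoc, ← mul_pow, succ_mul_centralBinom_succ]; ring
        _ ≤ 16 * (n + 1) ^ 2 * 16 ^ n := by gcongr
        _ = (n + 1) ^ 2 * 16 ^ (n + 1) := by ring
    exact Nat.le_of_mul_le_mul_left key (by positivity)

theorem cast_multinomial_sq_div_multinomial_two_nsmul {ι : Type*} (s : Finset ι) (f : ι → ℕ) :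
    (multinomial s f : ℝ) ^ 2 / multinomial s (2 • f)
      = (∏ i ∈ s, (centralBinom (f i) : ℝ)) / centralBinom (∑ i ∈ s, f i) := by
  have hspec (g : ι → ℕ) : (multinomial s g : ℝ) = (∑ i ∈ s, g i)! / ∏ i ∈ s, ((g i)! : ℝ) := by
    rw [eq_div_iff (by positivity), mul_comm]
    exact_mod_cast multinomial_spec s g
  simp only [hspec, cast_centralBinom, Pi.smul_apply, smul_eq_mul, ← mul_sum, prod_div_distrib,
    prod_pow]
  field_simp

end Nat

/-- The moment `𝔼 ⟪x, y⟫ ^ (2 * n)` for `y` uniform on the unit sphere of `ℝ^d` and `x` on it. -/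
def sphereEvenMoment (d : ℝ) (n : ℕ) : ℝ :=
  (ascPochhammer ℝ n).eval (1 / 2) / (ascPochhammer ℝ n).eval (d / 2)

theorem sphereEvenMoment_nonneg {d : ℝ} (hd : 0 < d) (n : ℕ) : 0 ≤ sphereEvenMoment d n :=
  div_nonneg (ascPochhammer_pos n _ (by norm_num)).le (ascPochhammer_pos n _ (by positivity)).le

theorem mul_sphereEvenMoment_sq_lt_one {d : ℝ} (hd : 2 ≤ d) {B : ℕ} (hB : 0 < B) :
    B * sphereEvenMoment d (B ^ 2) < 1 := by
  set N := B ^ 2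
  have hle : sphereEvenMoment d N ≤ centralBinom N / 4 ^ N := by
    rw [cast_centralBinom_eq_multichoose, mul_div_cancel_left₀ _ (by positivity),
      Ring.multichoose_eq_ascPochhammer_div]
    exact div_le_div_of_nonneg_left (ascPochhammer_pos N _ (by norm_num)).le (by positivity)
      (factorial_le_ascPochhammer_eval (by linarith) N)
  have hcb : ((centralBinom N / 4 ^ N) ^ 2 * (2 * N + 1) : ℝ) ≤ 1 := by
    rw [div_pow, ← pow_mul, div_mul_eq_mul_div, div_le_one (by positivity)]
    exact_mod_cast (centralBinom_sq_mul_le N).trans_eq (by rw [mul_comm, pow_mul]; norm_num)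
  have hr := sphereEvenMoment_nonneg (by linarith : 0 < d) N
  have hN : (N : ℝ) = B ^ 2 := by push_cast [N]; ring
  rw [hN] at hcb
  have hsq : (B * sphereEvenMoment d N) ^ 2 < 1 := by
    have : (B * sphereEvenMoment d N) ^ 2 ≤ B ^ 2 * (centralBinom N / 4 ^ N : ℝ) ^ 2 := by
      rw [mul_pow]; gcongr
    nlinarith [sq_nonneg ((B : ℝ) * (centralBinom N / 4 ^ N : ℝ))]
  exact (pow_lt_one_iff_of_nonneg (by positivity) two_ne_zero).mp hsq

theorem summable_hyp0F1 {α : ℝ} (hα : 1 ≤ α) (z : ℝ) :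
    Summable fun k => z ^ k / ((ascPochhammer ℝ k).eval α * k !) := by
  refine Summable.of_norm_bounded (Real.summable_pow_div_factorial |z|) fun k => ?_
  have hfac := factorial_le_ascPochhammer_eval hα k
  have h1 : (1 : ℝ) ≤ k ! := mod_cast k.factorial_pos
  have hP := ascPochhammer_pos k α (by linarith)
  rw [norm_div, norm_pow, Real.norm_eq_abs, Real.norm_of_nonneg (by positivity)]
  gcongr
  nlinarith

theorem hyp0F1_pos {α z : ℝ} (hα : 1 ≤ α) (hz : 0 ≤ z) : 0 < hyp0F1 α z := by
  have hterm (k : ℕ) : 0 ≤ z ^ k / ((ascPochhammer ℝ k).eval α * k !) :=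
    div_nonneg (pow_nonneg hz k)
      (mul_nonneg (ascPochhammer_pos k α (by linarith)).le (by positivity))
  exact one_pos.trans_le
    (by simpa [hyp0F1] using (summable_hyp0F1 hα z).le_tsum 0 fun k _ => hterm k)

theorem hyp0F1_term_eq (d t : ℝ) (n : ℕ) :
    (t ^ 2) ^ n / ((ascPochhammer ℝ n).eval (d / 2) * n !)
      = (2 * t) ^ (2 * n) / (2 * n)! * sphereEvenMoment d n := by
  have hhalf : (ascPochhammer ℝ n).eval (1 / 2) ≠ 0 := (ascPochhammer_pos n _ (by norm_num)).ne'
  rw [factorial_two_mul_eq_ascPochhammer, sphereEvenMoment, pow_mul, mul_pow]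
  field_simp
  ring

section

variable {E κ : Type*} [NormedAddCommGroup E] [InnerProductSpace ℝ E] [Fintype κ]

theorem card_le_sum_sum_inner_pow_two_mul {v : κ → E} (hv : ∀ i, ‖v i‖ = 1) (n : ℕ) :
    (Fintype.card κ : ℝ) ≤ ∑ i, ∑ j, ⟪v i, v j⟫ ^ (2 * n) := by
  have hdiag (i : κ) : 1 ≤ ∑ j, ⟪v i, v j⟫ ^ (2 * n) := by
    calc (1 : ℝ) = ⟪v i, v i⟫ ^ (2 * n) := by rw [real_inner_self_eq_norm_sq, hv i]; simp
      _ ≤ _ := single_le_sum (f := fun j => ⟪v i, v j⟫ ^ (2 * n))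
        (fun j _ => by rw [pow_mul]; positivity) (mem_univ i)
  simpa using sum_le_sum fun i (_ : i ∈ univ) => hdiag i

theorem hasSum_sum_sum_exp_inner (v : κ → E) (s : ℝ) :
    HasSum (fun k => s ^ k / k ! * ∑ i, ∑ j, ⟪v i, v j⟫ ^ k)
      (∑ i, ∑ j, Real.exp (s * ⟪v i, v j⟫)) := by
  have h := hasSum_sum fun i (_ : i ∈ univ) => hasSum_sum fun j (_ : j ∈ univ) =>
    Real.exp_eq_exp_ℝ ▸ NormedSpace.expSeries_div_hasSum_exp (s * ⟪v i, v j⟫)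
  simpa only [mul_pow, mul_sum, mul_div_right_comm] using h

end

section

variable {ι κ : Type*} [Fintype ι] [DecidableEq ι] [Fintype κ]

/-- The coordinates of `u^⊗k` in an orthonormal basis of the symmetric tensors, indexed by the
exponents `β` with `∑ i, β i = k`. -/
def veronese (u : EuclideanSpace ℝ ι) (β : ι → ℕ) : ℝ :=
  √(multinomial univ β) * ∏ i, u i ^ β i

theorem inner_pow_eq_sum_veronese (u v : EuclideanSpace ℝ ι) (k : ℕ) :
    ⟪u, v⟫ ^ k = ∑ β ∈ piAntidiag univ k, veronese u β * veronese v β := by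
  rw [EuclideanSpace.inner_eq_star_dotProduct, dotProduct, sum_pow_eq_sum_piAntidiag]
  refine sum_congr rfl fun β _ => ?_
  rw [veronese, veronese, mul_mul_mul_comm, Real.mul_self_sqrt (Nat.cast_nonneg _),
    ← prod_mul_distrib]
  simp [mul_pow, mul_comm]

theorem sum_sum_inner_pow_eq_sum_sq (v : κ → EuclideanSpace ℝ ι)
    (k : ℕ) : ∑ i, ∑ j, ⟪v i, v j⟫ ^ k = ∑ β ∈ piAntidiag univ k, (∑ i, veronese (v i) β) ^ 2 := by
  simp_rw [inner_pow_eq_sum_veronese, sq, sum_mul_sum]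
  exact (sum_congr rfl fun _ _ => sum_comm).trans sum_comm

theorem sum_veronese_two_nsmul_mul {u : EuclideanSpace ℝ ι} (hu : ‖u‖ = 1) (n : ℕ) :
    ∑ γ ∈ piAntidiag univ n,
      veronese u (2 • γ) * (multinomial univ γ / √(multinomial univ (2 • γ))) = 1 := by
  have hsq : ∑ i, u i ^ 2 = 1 := by rw [← EuclideanSpace.real_norm_sq_eq, hu, one_pow]
  calc _ = ∑ γ ∈ piAntidiag univ n, (multinomial univ γ : ℝ) * ∏ i, (u i ^ 2) ^ γ i := by
        refine sum_congr rfl fun γ _ => ?_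
        have : √(multinomial univ (2 • γ) : ℝ) ≠ 0 :=
          (Real.sqrt_pos.mpr (mod_cast multinomial_pos _ _)).ne'
        simp only [veronese, Pi.smul_apply, smul_eq_mul, pow_mul]
        field_simp
    _ = 1 := by rw [← sum_pow_eq_sum_piAntidiag, hsq, one_pow]

theorem sum_multinomial_sq_div_eq_inv_sphereEvenMoment (n : ℕ) :
    ∑ γ ∈ piAntidiag (univ : Finset ι) n, (multinomial univ γ : ℝ) ^ 2 / multinomial univ (2 • γ)
      = (sphereEvenMoment (Fintype.card ι) n)⁻¹ := by
  have hsum : ∑ γ ∈ piAntidiag (univ : Finset ι) n, ∏ i, (centralBinom (γ i) : ℝ)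
      = 4 ^ n * Ring.multichoose (Fintype.card ι / 2 : ℝ) n := by
    have h : ∑ i : ι, (1 / 2 : ℝ) = Fintype.card ι / 2 := by simp [div_eq_mul_inv]
    rw [← h, Ring.multichoose_sum, mul_sum]
    refine sum_congr rfl fun γ hγ => ?_
    simp only [cast_centralBinom_eq_multichoose, prod_mul_distrib, prod_pow_eq_pow_sum,
      (mem_piAntidiag.mp hγ).1]
  have hfac : (n ! : ℝ) ≠ 0 := Nat.cast_ne_zero.mpr (factorial_ne_zero n)
  have hhalf : (ascPochhammer ℝ n).eval (1 / 2) ≠ 0 := (ascPochhammer_pos n _ (by norm_num)).ne'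
  calc _ = ∑ γ ∈ piAntidiag (univ : Finset ι) n, (∏ i, (centralBinom (γ i) : ℝ)) / centralBinom n :=
        sum_congr rfl fun γ hγ => by
          rw [cast_multinomial_sq_div_multinomial_two_nsmul, (mem_piAntidiag.mp hγ).1]
    _ = _ := by
      rw [← sum_div, hsum, cast_centralBinom_eq_multichoose, Ring.multichoose_eq_ascPochhammer_div,
        Ring.multichoose_eq_ascPochhammer_div, sphereEvenMoment, inv_div]
      field_simp

theorem sq_card_mul_sphereEvenMoment_le_sum_sum_inner_pow {v : κ → EuclideanSpace ℝ ι}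
    (hv : ∀ i, ‖v i‖ = 1) (n : ℕ) :
    (Fintype.card κ : ℝ) ^ 2 * sphereEvenMoment (Fintype.card ι) n
      ≤ ∑ i, ∑ j, ⟪v i, v j⟫ ^ (2 * n) := by
  set r := sphereEvenMoment (Fintype.card ι) n
  set a : (ι → ℕ) → ℝ := fun β => ∑ i, veronese (v i) β
  -- `c` represents the symmetric tensor `(∑ i, eᵢ ⊗ eᵢ)^⊗n`, which pairs with `x^⊗2n` to `‖x‖²ⁿ`
  set c : (ι → ℕ) → ℝ := fun γ => multinomial univ γ / √(multinomial univ (2 • γ))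
  have hac : ∑ γ ∈ piAntidiag univ n, a (2 • γ) * c γ = Fintype.card κ := by
    simp only [a, c, sum_mul]
    rw [sum_comm, sum_congr rfl fun i _ => sum_veronese_two_nsmul_mul (hv i) n]
    simp
  have hc : ∑ γ ∈ piAntidiag univ n, c γ ^ 2 = r⁻¹ := by
    simp only [c, div_pow, Real.sq_sqrt (Nat.cast_nonneg _)]
    exact sum_multinomial_sq_div_eq_inv_sphereEvenMoment n
  have ha : ∑ γ ∈ piAntidiag univ n, a (2 • γ) ^ 2 ≤ ∑ i, ∑ j, ⟪v i, v j⟫ ^ (2 * n) := by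
    rw [sum_sum_inner_pow_eq_sum_sq]
    calc ∑ γ ∈ piAntidiag univ n, a (2 • γ) ^ 2
        = ∑ β ∈ (piAntidiag univ n).map ⟨(2 • ·), nsmul_right_injective two_ne_zero⟩,
            a β ^ 2 := by rw [sum_map]; rfl
      _ ≤ ∑ β ∈ piAntidiag univ (2 * n), a β ^ 2 := by
        refine sum_le_sum_of_subset_of_nonneg ?_ fun _ _ _ => sq_nonneg _
        rw [map_nsmul_piAntidiag_univ _ two_ne_zero]
        exact filter_subset _ _
  have hr : 0 ≤ r := inv_nonneg.mp (hc ▸ sum_nonneg fun _ _ => sq_nonneg _)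
  have hQ : 0 ≤ ∑ i, ∑ j, ⟪v i, v j⟫ ^ (2 * n) := (sum_nonneg fun _ _ => sq_nonneg _).trans ha
  have hcs := sum_mul_sq_le_sq_mul_sq (piAntidiag univ n) (fun γ => a (2 • γ)) c
  rw [hac, hc] at hcs
  calc (Fintype.card κ : ℝ) ^ 2 * r
      ≤ (∑ i, ∑ j, ⟪v i, v j⟫ ^ (2 * n)) * r⁻¹ * r := by gcongr; exact hcs.trans (by gcongr)
    _ ≤ ∑ i, ∑ j, ⟪v i, v j⟫ ^ (2 * n) := by
      rw [mul_assoc]; exact mul_le_of_le_one_right hQ inv_mul_le_one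

theorem sq_card_mul_hyp0F1_lt_sum_sum_exp_inner [Nonempty κ] (hι : 2 ≤ Fintype.card ι)
    {v : κ → EuclideanSpace ℝ ι} (hv : ∀ i, ‖v i‖ = 1) {t : ℝ}
    (ht : 0 < t) :
    (Fintype.card κ : ℝ) ^ 2 * hyp0F1 (Fintype.card ι / 2) (t ^ 2)
      < ∑ i, ∑ j, Real.exp (2 * t * ⟪v i, v j⟫) := by
  set B := Fintype.card κ
  have hd : (2 : ℝ) ≤ Fintype.card ι := mod_cast hι
  set d : ℝ := (Fintype.card ι : ℝ)
  set a : ℕ → ℝ := fun k => (2 * t) ^ k / k ! * ∑ i, ∑ j, ⟪v i, v j⟫ ^ k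
  have ha := hasSum_sum_sum_exp_inner v (2 * t)
  have ha_nonneg (k : ℕ) : 0 ≤ a k := by
    refine mul_nonneg (by positivity) ?_
    rw [sum_sum_inner_pow_eq_sum_sq]
    exact sum_nonneg fun _ _ => sq_nonneg _
  set b : ℕ → ℝ := fun n => (2 * t) ^ (2 * n) / (2 * n)! * (B ^ 2 * sphereEvenMoment d n)
  have hb : B ^ 2 * hyp0F1 (d / 2) (t ^ 2) = ∑' n, b n := by
    simp only [b, hyp0F1, ← tsum_mul_left, hyp0F1_term_eq]
    exact tsum_congr fun n => by ring
  have hb_le (n : ℕ) : b n ≤ a (2 * n) :=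
    mul_le_mul_of_nonneg_left (sq_card_mul_sphereEvenMoment_le_sum_sum_inner_pow hv n)
      (by positivity)
  have hb_lt : b (B ^ 2) < a (2 * B ^ 2) := by
    refine mul_lt_mul_of_pos_left ?_ (by positivity)
    calc (B : ℝ) ^ 2 * sphereEvenMoment d (B ^ 2) = B * (B * sphereEvenMoment d (B ^ 2)) := by ring
      _ < B * 1 := by gcongr; exact mul_sphereEvenMoment_sq_lt_one hd Fintype.card_pos
      _ ≤ _ := by simpa using card_le_sum_sum_inner_pow_two_mul hv (B ^ 2)
  calc (B : ℝ) ^ 2 * hyp0F1 (d / 2) (t ^ 2) = ∑' n, b n := hb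
    _ < ∑' n, a (2 * n) :=
      Summable.tsum_lt_tsum_of_nonneg
        (fun n => mul_nonneg (by positivity) (mul_nonneg (by positivity)
          (sphereEvenMoment_nonneg (by linarith) n)))
        hb_le hb_lt (ha.summable.comp_injective (mul_right_injective₀ two_ne_zero))
    _ ≤ ∑' k, a k :=
      tsum_comp_le_tsum_of_inj ha.summable ha_nonneg (mul_right_injective₀ two_ne_zero)
    _ = _ := ha.tsum_eq

end

theorem Real.exp_neg_mul_norm_sub_sq {E : Type*} [NormedAddCommGroup E] [InnerProductSpace ℝ E]
    {u v : E} (hu : ‖u‖ = 1) (hv : ‖v‖ = 1) (t : ℝ) :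
    Real.exp (-t * ‖u - v‖ ^ 2) = Real.exp (-2 * t) * Real.exp (2 * t * ⟪u, v⟫) := by
  rw [← Real.exp_add, norm_sub_sq_real, hu, hv]
  ring_nf

/-- Strict lower bound for the empirical (with-diagonal) uniformity quantity:
for any `B > 1` points on the unit sphere of `ℝ^m`,
`log((1/B²) Σ_{i,j} e^{−t‖u_i−u_j‖²}) > −2t + log ₀F₁(;m/2;t²)`. -/
theorem empirical_unif_gt (t : ℝ) (ht : 0 < t) {m B : ℕ} (hm : 2 ≤ m) (hB : 1 < B)
    (u : Fin B → Sph m) :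
    Real.log ((1 / (B : ℝ) ^ 2) *
        ∑ i : Fin B, ∑ j : Fin B, Real.exp (-t * ‖(u i : Euc m) - (u j : Euc m)‖ ^ 2)) >
      -2 * t + Real.log (hyp0F1 ((m : ℝ) / 2) (t ^ 2)) := by
  have hu (i : Fin B) : ‖(u i : Euc m)‖ = 1 := norm_eq_of_mem_sphere (u i)
  have : Nonempty (Fin B) := ⟨⟨0, by omega⟩⟩
  have hlt := sq_card_mul_hyp0F1_lt_sum_sum_exp_inner (by simpa using hm) hu ht
  simp only [Fintype.card_fin] at hlt
  have hF := hyp0F1_pos (α := m / 2) (by rw [le_div_iff₀ two_pos]; exact_mod_cast hm) (sq_nonneg t)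
  have hX : hyp0F1 (m / 2) (t ^ 2)
      < (∑ i, ∑ j, Real.exp (2 * t * ⟪(u i : Euc m), u j⟫)) / B ^ 2 := by
    rw [lt_div_iff₀ (by positivity)]
    linarith
  simp_rw [Real.exp_neg_mul_norm_sub_sq (hu _) (hu _), ← mul_sum]
  rw [mul_left_comm, one_div_mul_eq_div, Real.log_mul (Real.exp_ne_zero _) (hF.trans hX).ne',
    Real.log_exp]
  linarith [Real.log_lt_log hF hX]
end
end
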